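/- Multivariate SURE is unbiased: for y = x + n ∈ ℝ^N with n ~ N(0, σ²I) and h: ℝ^N → ℝ^N continuously differentiable with bounded partial derivatives, E[(1/N)·‖x - h(y)‖²] = E[(1/N)·‖y - h(y)‖² - σ² + (2σ²/N)·∑ᵢ ∂hᵢ(y)/∂yᵢ]. -/

import Mathlib

/-!
Write `y = x + n`. Coordinatewise,
`(y i - h y i)² = (x i - h y i)² + n i * (n i + 2 x i - 2 h y i)`,
and Stein's lemma `E[n i * g n] = σ² E[∂ᵢ g n]` (Gaussian integration by parts in the `i`-th
variable, after splitting off that coordinate with Fubini) turns the expectation of the last term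
into `σ² (1 - 2 E[∂ᵢ hᵢ y])`. Summing over `i` gives the identity. Bounded partial derivatives
make `h` Lipschitz, so all terms are in `L²` of the Gaussian measure, which has moments of all
orders.
-/

open MeasureTheory ProbabilityTheory Real
open scoped NNReal ENNReal

theorem LipschitzWith.comp_memLp_of_isFiniteMeasure {α E F : Type*} {m : MeasurableSpace α}
    {μ : Measure α} [IsFiniteMeasure μ] [NormedAddCommGroup E] [NormedAddCommGroup F]
    {p : ℝ≥0∞} {K : ℝ≥0} {g : E → F} {f : α → E} (hg : LipschitzWith K g)
    (hf : MemLp f p μ) : MemLp (g ∘ f) p μ := by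
  convert ((hg.sub (LipschitzWith.const (g 0))).comp_memLp (by simp) hf).add
    (memLp_const (g 0)) using 1
  ext
  simp

theorem ContinuousLinearMap.norm_le_card_mul_of_abs_apply_single_le {ι κ : Type*} [Fintype ι]
    [DecidableEq ι] [Fintype κ] (L : (ι → ℝ) →L[ℝ] (κ → ℝ)) {C : ℝ} (hC0 : 0 ≤ C)
    (hC : ∀ i j, |L (Pi.single j 1) i| ≤ C) : ‖L‖ ≤ Fintype.card ι * C := by
  refine L.opNorm_le_bound (by positivity) fun z =>
    (pi_norm_le_iff_of_nonneg (by positivity)).2 fun i => ?_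
  have hz : L z i = ∑ j, z j * L (Pi.single j 1) i := by
    conv_lhs => rw [← Finset.univ_sum_single z]
    simp only [map_sum, Finset.sum_apply]
    refine Finset.sum_congr rfl fun j _ => ?_
    rw [← smul_eq_mul, ← Pi.smul_apply, ← map_smul, ← Pi.single_smul', smul_eq_mul, mul_one]
  calc ‖L z i‖ ≤ ∑ j, |z j| * C := by
        rw [hz, Real.norm_eq_abs]
        refine (Finset.abs_sum_le_sum_abs _ _).trans (Finset.sum_le_sum fun j _ => ?_)
        rw [abs_mul]
        exact mul_le_mul_of_nonneg_left (hC i j) (abs_nonneg _)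
    _ ≤ ∑ _j : ι, ‖z‖ * C := by
        gcongr with j
        exact norm_le_pi_norm z j
    _ = Fintype.card ι * C * ‖z‖ := by
        simp only [Finset.sum_const, Finset.card_univ, nsmul_eq_mul]
        ring

theorem lipschitzWith_of_abs_fderiv_apply_single_le {ι κ : Type*} [Fintype ι] [DecidableEq ι]
    [Fintype κ] {h : (ι → ℝ) → (κ → ℝ)} (hh : Differentiable ℝ h) {C : ℝ} (hC0 : 0 ≤ C)
    (hC : ∀ y i j, |fderiv ℝ h y (Pi.single j 1) i| ≤ C) :
    LipschitzWith (Fintype.card ι * C).toNNReal h :=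
  lipschitzWith_of_nnnorm_fderiv_le hh fun y => by
    rw [← NNReal.coe_le_coe, coe_nnnorm, Real.coe_toNNReal _ (by positivity)]
    exact (fderiv ℝ h y).norm_le_card_mul_of_abs_apply_single_le hC0 (hC y)

theorem DifferentiableAt.hasDerivAt_add_update {ι F : Type*} [Fintype ι] [DecidableEq ι]
    [NormedAddCommGroup F] [NormedSpace ℝ F] {g : (ι → ℝ) → F} {x y : ι → ℝ}
    (hg : DifferentiableAt ℝ g (x + y)) (i : ι) :
    HasDerivAt (fun t => g (x + Function.update y i t)) (fderiv ℝ g (x + y) (Pi.single i 1))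
      (y i) := by
  have hupdate := hg.hasFDerivAt.comp_hasDerivAt_of_eq (x i + y i)
    (hasDerivAt_update (x + y) i _) (Function.update_eq_self i (x + y)).symm
  convert hupdate.comp_const_add (x i) (y i) using 1
  ext t
  rw [Function.comp_apply, Function.update_add, Function.update_eq_self]

namespace ProbabilityTheory

theorem hasDerivAt_gaussianPDFReal (μ : ℝ) (v : ℝ≥0) (x : ℝ) :
    HasDerivAt (gaussianPDFReal μ v) (-((x - μ) / v) * gaussianPDFReal μ v x) x := by
  have hexp := ((((hasDerivAt_id' x).sub_const μ).fun_pow 2).fun_neg.div_const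
    (2 * (v : ℝ))).exp.const_mul (√(2 * π * v))⁻¹
  refine HasDerivAt.congr_deriv (f := gaussianPDFReal μ v) hexp ?_
  simp only [gaussianPDFReal]
  ring

theorem integrable_gaussianReal_iff_integrable_smul {E : Type*} [NormedAddCommGroup E]
    [NormedSpace ℝ E] {μ : ℝ} {v : ℝ≥0} {f : ℝ → E} (hv : v ≠ 0) :
    Integrable f (gaussianReal μ v) ↔ Integrable (fun x => gaussianPDFReal μ v x • f x) := by
  rw [gaussianReal_of_var_ne_zero _ hv, integrable_withDensity_iff_integrable_smul'
    (measurable_gaussianPDF μ v) (ae_of_all _ fun _ => gaussianPDF_lt_top)]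
  simp only [toReal_gaussianPDF]

theorem integral_sub_mul_eq_integral_deriv_gaussianReal {μ : ℝ} {v : ℝ≥0} {g g' : ℝ → ℝ}
    (hg : ∀ x, HasDerivAt g (g' x) x) (hg_int : Integrable g (gaussianReal μ v))
    (hmul_int : Integrable (fun x => (x - μ) * g x) (gaussianReal μ v))
    (hg'_int : Integrable g' (gaussianReal μ v)) :
    ∫ x, (x - μ) * g x ∂gaussianReal μ v = v * ∫ x, g' x ∂gaussianReal μ v := by
  rcases eq_or_ne v 0 with rfl | hv
  · simp only [gaussianReal_zero_var, integral_dirac, sub_self, zero_mul, NNReal.coe_zero]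
  rw [integrable_gaussianReal_iff_integrable_smul hv] at hg_int hmul_int hg'_int
  simp only [integral_gaussianReal_eq_integral_smul hv, smul_eq_mul] at *
  have hparts := integral_mul_deriv_eq_deriv_mul_of_integrable (u := g)
    (v := gaussianPDFReal μ v) (fun x _ => hg x) (fun x _ => hasDerivAt_gaussianPDFReal μ v x)
    ((hmul_int.const_mul (-(v : ℝ)⁻¹)).congr
      (ae_of_all _ fun x => by simp only [Pi.mul_apply]; ring))
    (hg'_int.congr (ae_of_all _ fun x => by simp [mul_comm]))
    (hg_int.congr (ae_of_all _ fun x => by simp [mul_comm]))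
  calc ∫ x, gaussianPDFReal μ v x * ((x - μ) * g x)
      = -v * ∫ x, g x * (-((x - μ) / v) * gaussianPDFReal μ v x) := by
        rw [← integral_const_mul]
        congr 1 with x
        field_simp
    _ = v * ∫ x, gaussianPDFReal μ v x * g' x := by
        rw [hparts]
        simp only [mul_comm (g' _)]
        ring

theorem memLp_id_pi_gaussianReal {ι : Type*} [Fintype ι] (μ : ι → ℝ) (v : ι → ℝ≥0) (p : ℝ≥0) :
    MemLp id p (Measure.pi fun j => gaussianReal (μ j) (v j)) :=
  memLp_pi_iff.2 fun j =>
    (memLp_id_gaussianReal p).comp_measurePreserving (measurePreserving_eval _ j)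

section Pi

variable {n : ℕ} (μ : Fin n → ℝ) (v : Fin n → ℝ≥0)

local notation "𝒩" => Measure.pi fun j => gaussianReal (μ j) (v j)

theorem integral_sub_mul_eq_integral_partialDeriv_pi_gaussianReal (i : Fin n)
    {f f' : (Fin n → ℝ) → ℝ}
    (hf : ∀ y, HasDerivAt (fun t => f (Function.update y i t)) (f' y) (y i))
    (hf_int : Integrable f 𝒩) (hmul_int : Integrable (fun y => (y i - μ i) * f y) 𝒩)
    (hf'_int : Integrable f' 𝒩) :
    ∫ y, (y i - μ i) * f y ∂𝒩 = v i * ∫ y, f' y ∂𝒩 := by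
  obtain ⟨m, rfl⟩ : ∃ m, n = m + 1 := Nat.exists_eq_add_one.2 i.pos
  set γi := gaussianReal (μ i) (v i)
  set γ' := Measure.pi fun j : Fin m => gaussianReal (μ (i.succAbove j)) (v (i.succAbove j))
  have hmp := (measurePreserving_piFinSuccAbove (fun j => gaussianReal (μ j) (v j)) i).symm
  have hemb := (MeasurableEquiv.piFinSuccAbove (fun _ => ℝ) i).symm.measurableEmbedding
  have hprod {F : (Fin (m + 1) → ℝ) → ℝ}
      (hF : Integrable F (Measure.pi fun j => gaussianReal (μ j) (v j))) :
      Integrable (fun p : ℝ × (Fin m → ℝ) => F (i.insertNth p.1 p.2)) (γi.prod γ') :=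
    (hmp.integrable_comp_emb hemb).2 hF
  have hslice : ∀ᵐ w ∂γ', ∫ t, (t - μ i) * f (i.insertNth t w) ∂γi
      = v i * ∫ t, f' (i.insertNth t w) ∂γi := by
    filter_upwards [(hprod hf_int).prod_left_ae, (hprod hmul_int).prod_left_ae,
      (hprod hf'_int).prod_left_ae] with w h1 h2 h3
    refine integral_sub_mul_eq_integral_deriv_gaussianReal (fun t => ?_) h1
      (by simpa only [Fin.insertNth_apply_same] using h2) h3
    simpa only [Fin.update_insertNth, Fin.insertNth_apply_same] using hf (i.insertNth t w)
  rw [← hmp.integral_comp', ← hmp.integral_comp']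
  have hsymm (p : ℝ × (Fin m → ℝ)) :
      (MeasurableEquiv.piFinSuccAbove (fun _ => ℝ) i).symm p = i.insertNth p.1 p.2 := rfl
  simp only [hsymm, Fin.insertNth_apply_same]
  rw [integral_prod_symm _ (by simpa only [Fin.insertNth_apply_same] using hprod hmul_int),
    integral_prod_symm _ (hprod hf'_int), ← integral_const_mul]
  exact integral_congr_ae hslice

end Pi

section Centered

variable {n : ℕ} (v : Fin n → ℝ≥0)

local notation "𝒩₀" => Measure.pi fun j => gaussianReal 0 (v j)

theorem integral_sub_sq_eq_pi_gaussianReal (i : Fin n) {f f' : (Fin n → ℝ) → ℝ}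
    (hf : ∀ y, HasDerivAt (fun t => f (Function.update y i t)) (f' y) (y i))
    (hf_memLp : MemLp f 2 𝒩₀) (hf'_int : Integrable f' 𝒩₀) :
    ∫ y, (y i - f y) ^ 2 ∂𝒩₀ = ∫ y, f y ^ 2 ∂𝒩₀ + v i - 2 * v i * ∫ y, f' y ∂𝒩₀ := by
  have hcoord : MemLp (fun y : Fin n → ℝ => y i) 2 𝒩₀ := (memLp_id_pi_gaussianReal 0 v 2).eval i
  have hg : MemLp (fun y => y i - 2 * f y) 2 𝒩₀ := hcoord.sub (hf_memLp.const_mul 2)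
  have hmul : Integrable (fun y => y i * (y i - 2 * f y)) 𝒩₀ := hcoord.integrable_mul hg
  have hstein := integral_sub_mul_eq_integral_partialDeriv_pi_gaussianReal 0 v i
    (f := fun y => y i - 2 * f y) (f' := fun y => 1 - 2 * f' y)
    (fun y => by
      simpa only [Function.update_self] using (hasDerivAt_id' (y i)).fun_sub ((hf y).const_mul 2))
    (hg.integrable one_le_two) (by simpa only [Pi.zero_apply, sub_zero] using hmul)
    ((integrable_const 1).sub (hf'_int.const_mul 2))
  simp only [Pi.zero_apply, sub_zero] at hstein
  calc ∫ y, (y i - f y) ^ 2 ∂𝒩₀ = ∫ y, (f y ^ 2 + y i * (y i - 2 * f y)) ∂𝒩₀ := by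
        congr with y
        ring
    _ = _ := by
        rw [integral_add hf_memLp.integrable_sq hmul, hstein,
          integral_sub (integrable_const 1) (hf'_int.const_mul 2), integral_const_mul]
        simp only [integral_const, probReal_univ, smul_eq_mul, mul_one]
        ring

theorem integral_sq_add_sub_apply_eq_pi_gaussianReal (x : Fin n → ℝ)
    {h : (Fin n → ℝ) → (Fin n → ℝ)} (hh : Differentiable ℝ h) (i : Fin n)
    (h_memLp : MemLp (fun y => h (x + y) i) 2 𝒩₀)
    (hD_int : Integrable (fun y => fderiv ℝ h (x + y) (Pi.single i 1) i) 𝒩₀) :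
    ∫ y, ((x + y) i - h (x + y) i) ^ 2 ∂𝒩₀
      = ∫ y, (x i - h (x + y) i) ^ 2 ∂𝒩₀ + v i
        - 2 * v i * ∫ y, fderiv ℝ h (x + y) (Pi.single i 1) i ∂𝒩₀ := by
  convert integral_sub_sq_eq_pi_gaussianReal v i (f := fun y => h (x + y) i - x i)
    (fun y => (hasDerivAt_pi.1 ((hh _).hasDerivAt_add_update i) i).sub_const (x i))
    (h_memLp.sub (memLp_const (x i))) hD_int using 3 with y
  · rw [Pi.add_apply]
    ring
  · congr 1 with y
    ring

end Centered

end ProbabilityTheory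

theorem sure_unbiased_multivariate_general (N : ℕ) (hN : 0 < N) (x : Fin N → ℝ)
    (σ : ℝ≥0)
    (h : (Fin N → ℝ) → (Fin N → ℝ)) (hdiff : ContDiff ℝ 1 h)
    (C : ℝ) (hC : ∀ (y : Fin N → ℝ) (i j : Fin N),
      |fderiv ℝ h y (Pi.single j 1) i| ≤ C) :
    ∫ n, (1 / (N : ℝ)) * ∑ i, (x i - h (x + n) i) ^ 2
        ∂(Measure.pi fun _ : Fin N => gaussianReal 0 (σ ^ 2))
      = ∫ n, ((1 / (N : ℝ)) * ∑ i, ((x + n) i - h (x + n) i) ^ 2 - (σ : ℝ) ^ 2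
          + (2 * (σ : ℝ) ^ 2 / (N : ℝ)) * ∑ i, fderiv ℝ h (x + n) (Pi.single i 1) i)
        ∂(Measure.pi fun _ : Fin N => gaussianReal 0 (σ ^ 2)) := by
  set γ := Measure.pi fun _ : Fin N => gaussianReal 0 (σ ^ 2)
  have hh : Differentiable ℝ h := hdiff.differentiable one_ne_zero
  have hLip := lipschitzWith_of_abs_fderiv_apply_single_le hh
    ((abs_nonneg _).trans (hC 0 ⟨0, hN⟩ ⟨0, hN⟩)) hC
  have hy : MemLp (fun n => x + n) 2 γ := (memLp_const x).add (memLp_id_pi_gaussianReal 0 _ 2)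
  have hhy : MemLp (fun n => h (x + n)) 2 γ := hLip.comp_memLp_of_isFiniteMeasure hy
  have hA (i : Fin N) : Integrable (fun n => (x i - h (x + n) i) ^ 2) γ :=
    ((memLp_const (x i)).sub (hhy.eval i)).integrable_sq
  have hB (i : Fin N) : Integrable (fun n => ((x + n) i - h (x + n) i) ^ 2) γ :=
    ((hy.eval i).sub (hhy.eval i)).integrable_sq
  have hD (i : Fin N) : Integrable (fun n => fderiv ℝ h (x + n) (Pi.single i 1) i) γ :=
    .of_bound (by fun_prop) C (ae_of_all _ fun n => hC (x + n) i i)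
  have hBsum := (integrable_finsetSum Finset.univ fun i _ => hB i).const_mul (1 / (N : ℝ))
  have hDsum := (integrable_finsetSum Finset.univ fun i _ => hD i).const_mul (2 * (σ : ℝ) ^ 2 / N)
  rw [integral_const_mul, integral_finsetSum Finset.univ fun i _ => hA i,
    integral_add ?_ hDsum, integral_sub hBsum (integrable_const _), integral_const_mul,
    integral_const_mul, integral_finsetSum Finset.univ fun i _ => hB i,
    integral_finsetSum Finset.univ fun i _ => hD i]
  · simp only [γ, integral_sq_add_sub_apply_eq_pi_gaussianReal _ x hh _ (hhy.eval _) (hD _),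
      Finset.sum_add_distrib, Finset.sum_sub_distrib, ← Finset.mul_sum, integral_const,
      probReal_univ, one_smul, Finset.sum_const, Finset.card_univ, Fintype.card_fin, nsmul_eq_mul,
      NNReal.coe_pow]
    field_simp
    ring
  · exact hBsum.sub (integrable_const _)

/-- Multivariate SURE is unbiased: for `y = x + n ∈ ℝ^N` with `n ~ N(0, σ²I)` and
`h : ℝ^N → ℝ^N` continuously differentiable with bounded partial derivatives,
`E[(1/N)‖x - h(y)‖²] = E[(1/N)‖y - h(y)‖² - σ² + (2σ²/N)·∑ᵢ ∂hᵢ(y)/∂yᵢ]`. -/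
theorem sure_unbiased_multivariate (N : ℕ) (hN : 0 < N) (x : Fin N → ℝ)
    (σ : ℝ≥0) (hσ : 0 < σ)
    (h : (Fin N → ℝ) → (Fin N → ℝ)) (hdiff : ContDiff ℝ 1 h)
    (C : ℝ) (hC : ∀ (y : Fin N → ℝ) (i j : Fin N),
      |fderiv ℝ h y (Pi.single j 1) i| ≤ C) :
    ∫ n, (1 / (N : ℝ)) * ∑ i, (x i - h (x + n) i) ^ 2
        ∂(Measure.pi fun _ : Fin N => gaussianReal 0 (σ ^ 2))
      = ∫ n, ((1 / (N : ℝ)) * ∑ i, ((x + n) i - h (x + n) i) ^ 2 - (σ : ℝ) ^ 2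
          + (2 * (σ : ℝ) ^ 2 / (N : ℝ)) * ∑ i, fderiv ℝ h (x + n) (Pi.single i 1) i)
        ∂(Measure.pi fun _ : Fin N => gaussianReal 0 (σ ^ 2)) :=
  sure_unbiased_multivariate_general N hN x σ h hdiff C hC
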